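/- Uniqueness of the maximal sum-rate vector and optimality of Greedy Matching: if k ≤ n ≤ k + i − 2 (so i ≥ 2), then the vector λ* = (1,…,1,0,…,0) with i ones followed by k−i zeros is the unique vector λ ∈ S_i(n,k) satisfying Σ_{j=1}^k λ_j = i. Moreover, λ* admits exactly one valid allocation, namely the greedy one in which for each j ∈ [i] the full unit demand λ_j = 1 is routed to the singleton systematic recovery set {j} and all other recovery sets receive weight 0. -/

import Mathlib

open Matrix

/-- `R ⊆ [n]` is a recovery set for object `j` under generator matrix `G`:
the standard basis vector `e_j` lies in the span of the columns of `G` indexed by `R`,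
and minimally so. -/
def IsRecoverySet {F : Type*} [Field F] {k n : ℕ} (G : Matrix (Fin k) (Fin n) F)
    (j : Fin k) (R : Finset (Fin n)) : Prop :=
  (Pi.single j 1 : Fin k → F) ∈ Submodule.span F (Gᵀ '' (R : Set (Fin n))) ∧
    ∀ S : Finset (Fin n), S ⊂ R →
      (Pi.single j 1 : Fin k → F) ∉ Submodule.span F (Gᵀ '' (S : Set (Fin n)))

/-- A valid allocation of request rates `lam` to recovery sets: nonnegative weights
`w j R` supported on recovery sets, summing to `lam j` for each object `j`, and
loading each server `l` by at most its unit capacity. -/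
def IsValidAllocation {F : Type*} [Field F] {k n : ℕ} (G : Matrix (Fin k) (Fin n) F)
    (lam : Fin k → ℝ) (w : Fin k → Finset (Fin n) → ℝ) : Prop :=
  (∀ j R, 0 ≤ w j R) ∧
  (∀ j R, ¬ IsRecoverySet G j R → w j R = 0) ∧
  (∀ j, ∑ R : Finset (Fin n), w j R = lam j) ∧
  (∀ l : Fin n, ∑ j : Fin k, ∑ R ∈ Finset.univ.filter (fun R : Finset (Fin n) => l ∈ R),
      w j R ≤ 1)

/-- The service rate region of `G`. -/
def ServiceRegion {F : Type*} [Field F] {k n : ℕ} (G : Matrix (Fin k) (Fin n) F) :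
    Set (Fin k → ℝ) :=
  {lam | (∀ j, 0 ≤ lam j) ∧ ∃ w, IsValidAllocation G lam w}

/-- `Gmat M i` = the `k × n` matrix formed by the `i` leftmost (systematic) columns of `M`
followed by the `n - i` rightmost (parity) columns of `M`. -/
def Gmat {F : Type*} [Field F] {k n : ℕ} (M : Matrix (Fin k) (Fin (k + n)) F) (i : ℕ) :
    Matrix (Fin k) (Fin n) F :=
  Matrix.of fun r l =>
    if (l : ℕ) < i then M r ⟨(l : ℕ), by have := l.isLt; omega⟩
    else M r ⟨k + (l : ℕ), by have := l.isLt; omega⟩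

/-!
The `i` systematic servers of `G_i(n,k)` have total capacity `i`. By the MDS property, a
recovery set for an object is either its systematic singleton or has at least `k` elements,
and in the latter case it contains at least `k - (n - i) ≥ 2` systematic servers. So an
allocation of total rate `i` loads the systematic servers by at least `i`, with equality only if
it uses nothing but systematic singletons; each of those carries rate at most `1`, which forces
`λ = λ*` and the greedy allocation.
-/

open Finset

lemma eq_zero_of_sum_mul_le_sum {ι R : Type*} [Fintype ι] [CommRing R] [LinearOrder R]
    [IsStrictOrderedRing R] {f c : ι → R} (hf : ∀ x, 0 ≤ f x)
    (hc : ∀ x, f x ≠ 0 → 1 ≤ c x) (h : ∑ x, c x * f x ≤ ∑ x, f x) {x : ι} (hx : 1 < c x) :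
    f x = 0 := by
  have hterm : ∀ y ∈ univ, 0 ≤ (c y - 1) * f y := fun y _ => by
    by_cases hy : f y = 0
    · simp [hy]
    · exact mul_nonneg (sub_nonneg.2 (hc y hy)) (hf y)
  have hsum : ∑ y, (c y - 1) * f y = 0 := by
    refine le_antisymm ?_ (sum_nonneg hterm)
    simp only [sub_mul, one_mul, sum_sub_distrib]
    linarith
  have := (sum_eq_zero_iff_of_nonneg hterm).1 hsum x (mem_univ x)
  exact (mul_eq_zero.1 this).resolve_left (by linarith)

lemma notMem_span_image_of_card_lt {K V ι : Type*} [Field K] [AddCommGroup V] [Module K V]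
    [Fintype ι] [DecidableEq ι] {v : ι → V} {k : ℕ}
    (hv : ∀ S : Finset ι, #S = k → LinearIndepOn K v (S : Set ι)) (hk : k ≤ Fintype.card ι)
    {S : Finset ι} (hS : #S < k) {c : ι} (hc : c ∉ S) :
    v c ∉ Submodule.span K (v '' S) := by
  obtain ⟨T, hST, -, hT⟩ := exists_subsuperset_card_eq (n := k) (subset_univ (insert c S))
    (by rw [card_insert_of_notMem hc]; omega) (by simpa using hk)
  refine ((hv T hT).mono ?_).notMem_span_of_insert (by simpa using hc)
  rw [← coe_insert]
  exact coe_subset.2 hST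

lemma card_add_card_le_card_inter_add_card {α : Type*} [Fintype α] [DecidableEq α]
    (s t : Finset α) : #s + #t ≤ #(s ∩ t) + Fintype.card α := by
  rw [← card_inter_add_card_union s t]
  exact Nat.add_le_add_left (card_le_univ _) _

namespace IsValidAllocation

variable {F : Type*} [Field F] {k n : ℕ} {G : Matrix (Fin k) (Fin n) F} {lam : Fin k → ℝ}
  {w : Fin k → Finset (Fin n) → ℝ}

lemma nonneg (hw : IsValidAllocation G lam w) (j : Fin k) (R : Finset (Fin n)) : 0 ≤ w j R :=
  hw.1 j R

lemma isRecoverySet_of_ne_zero (hw : IsValidAllocation G lam w) {j : Fin k}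
    {R : Finset (Fin n)} (h : w j R ≠ 0) : IsRecoverySet G j R :=
  not_imp_comm.1 (hw.2.1 j R) h

lemma sum_eq (hw : IsValidAllocation G lam w) (j : Fin k) : ∑ R, w j R = lam j :=
  hw.2.2.1 j

lemma load_le_one (hw : IsValidAllocation G lam w) (l : Fin n) :
    ∑ j, ∑ R ∈ univ.filter (l ∈ ·), w j R ≤ 1 :=
  hw.2.2.2 l

lemma le_one_of_mem (hw : IsValidAllocation G lam w) (j : Fin k) {R : Finset (Fin n)}
    {l : Fin n} (hl : l ∈ R) : w j R ≤ 1 :=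
  calc w j R ≤ ∑ R ∈ univ.filter (l ∈ ·), w j R :=
        single_le_sum (fun R _ => hw.nonneg j R) (by simpa using hl)
    _ ≤ ∑ j, ∑ R ∈ univ.filter (l ∈ ·), w j R :=
        single_le_sum (f := fun j => ∑ R ∈ univ.filter (l ∈ ·), w j R)
          (fun j _ => sum_nonneg fun R _ => hw.nonneg j R) (mem_univ j)
    _ ≤ 1 := hw.load_le_one l

lemma sum_card_inter_mul_le (hw : IsValidAllocation G lam w) (T : Finset (Fin n)) :
    ∑ j, ∑ R, (#(R ∩ T) : ℝ) * w j R ≤ #T :=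
  calc ∑ j, ∑ R, (#(R ∩ T) : ℝ) * w j R
        = ∑ l ∈ T, ∑ j, ∑ R ∈ univ.filter (l ∈ ·), w j R := by
        rw [sum_comm (s := T)]
        refine sum_congr rfl fun j _ => ?_
        simp only [sum_filter]
        rw [sum_comm (s := T)]
        refine sum_congr rfl fun R _ => ?_
        rw [← sum_filter, sum_const, nsmul_eq_mul, filter_mem_eq_inter, inter_comm]
    _ ≤ ∑ _l ∈ T, (1 : ℝ) := sum_le_sum fun l _ => hw.load_le_one l
    _ = #T := by simp

lemma eq_zero_of_two_le_card_inter (hw : IsValidAllocation G lam w) (T : Finset (Fin n))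
    (hT : ∀ j R, IsRecoverySet G j R → 1 ≤ #(R ∩ T)) (hsum : ∑ j, lam j = #T)
    {j : Fin k} {R : Finset (Fin n)} (hR : 2 ≤ #(R ∩ T)) : w j R = 0 := by
  let f : Fin k × Finset (Fin n) → ℝ := fun p => w p.1 p.2
  let c : Fin k × Finset (Fin n) → ℝ := fun p => #(p.2 ∩ T)
  refine eq_zero_of_sum_mul_le_sum (f := f) (c := c) (x := (j, R)) (fun p => hw.nonneg p.1 p.2)
    (fun p hp => by simp only [c]; exact_mod_cast hT p.1 p.2 (hw.isRecoverySet_of_ne_zero hp))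
    ?_ (by simp only [c]; exact_mod_cast hR)
  calc ∑ p, c p * f p = ∑ j, ∑ R, (#(R ∩ T) : ℝ) * w j R := Fintype.sum_prod_type _
    _ ≤ ∑ j, lam j := hsum ▸ hw.sum_card_inter_mul_le T
    _ = ∑ p, f p := by
        rw [Fintype.sum_prod_type]
        exact sum_congr rfl fun j _ => (hw.sum_eq j).symm

end IsValidAllocation

def systematicServers (n i : ℕ) : Finset (Fin n) := {l | (l : ℕ) < i}

lemma card_systematicServers {n i : ℕ} (h : i ≤ n) : #(systematicServers n i) = i := by
  simp [systematicServers, Fin.card_filter_val_lt, h]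

def greedyRate (k i : ℕ) : Fin k → ℝ := fun j => if (j : ℕ) < i then 1 else 0

def greedyAllocation {k n : ℕ} (hkn : k ≤ n) (i : ℕ) : Fin k → Finset (Fin n) → ℝ :=
  fun j R => if (j : ℕ) < i ∧ R = {Fin.castLE hkn j} then 1 else 0

lemma sum_greedyRate {k i : ℕ} (hik : i ≤ k) : ∑ j, greedyRate k i j = i := by
  simp [greedyRate, sum_boole, Fin.card_filter_val_lt, hik]

section Gmat

variable {F : Type*} [Field F] {k n : ℕ}

def Matrix.IsSystematic (M : Matrix (Fin k) (Fin (k + n)) F) : Prop :=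
  ∀ j r : Fin k, M r (Fin.castAdd n j) = if r = j then 1 else 0

def Matrix.IsMDS (M : Matrix (Fin k) (Fin (k + n)) F) : Prop :=
  ∀ S : Finset (Fin (k + n)), #S = k → LinearIndepOn F Mᵀ (S : Set (Fin (k + n)))

def Gmat.colIndex (k i : ℕ) (l : Fin n) : Fin (k + n) :=
  if (l : ℕ) < i then Fin.castLE (Nat.le_add_left n k) l else Fin.natAdd k l

lemma Gmat.colIndex_eq_castAdd_iff {i : ℕ} {l : Fin n} {j : Fin k} :
    Gmat.colIndex k i l = Fin.castAdd n j ↔ (l : ℕ) = j ∧ (l : ℕ) < i := by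
  unfold Gmat.colIndex
  split_ifs <;> simp [Fin.ext_iff] <;> omega

variable {M : Matrix (Fin k) (Fin (k + n)) F} {i : ℕ}

lemma Gmat_transpose_apply (M : Matrix (Fin k) (Fin (k + n)) F) (i : ℕ) (l : Fin n) :
    (Gmat M i)ᵀ l = Mᵀ (Gmat.colIndex k i l) := by
  ext r
  simp only [transpose_apply, Gmat, Gmat.colIndex, of_apply]
  split_ifs <;> rfl

lemma Gmat_transpose_image (M : Matrix (Fin k) (Fin (k + n)) F) (i : ℕ) (R : Finset (Fin n)) :
    (Gmat M i)ᵀ '' R = Mᵀ '' (R.image (Gmat.colIndex k i) : Set (Fin (k + n))) := by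
  rw [coe_image]
  exact (Set.image_congr fun l _ => Gmat_transpose_apply M i l).trans (Set.image_image _ _ _).symm

lemma Matrix.IsSystematic.transpose_castAdd (hsys : M.IsSystematic) (j : Fin k) :
    Mᵀ (Fin.castAdd n j) = Pi.single j 1 := by
  ext r
  rw [transpose_apply, hsys j r, Pi.single_apply]

lemma Matrix.IsSystematic.Gmat_transpose_castLE (hsys : M.IsSystematic) (hkn : k ≤ n)
    {j : Fin k} (hj : (j : ℕ) < i) : (Gmat M i)ᵀ (Fin.castLE hkn j) = Pi.single j 1 := by
  rw [Gmat_transpose_apply, ← hsys.transpose_castAdd j]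
  exact congrArg Mᵀ (Gmat.colIndex_eq_castAdd_iff.2 ⟨rfl, hj⟩)

lemma Matrix.IsSystematic.isRecoverySet_Gmat_castLE (hsys : M.IsSystematic) (hkn : k ≤ n)
    {j : Fin k} (hj : (j : ℕ) < i) : IsRecoverySet (Gmat M i) j {Fin.castLE hkn j} := by
  refine ⟨?_, fun S hS => ?_⟩
  · exact Submodule.subset_span ⟨_, mem_singleton_self _, hsys.Gmat_transpose_castLE hkn hj⟩
  · rw [ssubset_singleton_iff.1 hS, Set.image_eq_empty (f := (Gmat M i)ᵀ) |>.2 coe_empty,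
      Submodule.span_empty, Submodule.mem_bot]
    exact Pi.single_ne_zero_iff.2 one_ne_zero

lemma IsRecoverySet.eq_singleton_or_le_card (hsys : M.IsSystematic) (hMDS : M.IsMDS)
    (hkn : k ≤ n) {j : Fin k} {R : Finset (Fin n)} (hR : IsRecoverySet (Gmat M i) j R) :
    ((j : ℕ) < i ∧ R = {Fin.castLE hkn j}) ∨ k ≤ #R := by
  by_cases hj : (j : ℕ) < i ∧ Fin.castLE hkn j ∈ R
  · refine .inl ⟨hj.1, ?_⟩
    by_contra hne
    exact hR.2 _ (ssubset_of_subset_of_ne (singleton_subset_iff.2 hj.2) (Ne.symm hne))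
      (hsys.isRecoverySet_Gmat_castLE hkn hj.1).1
  · refine .inr (not_lt.1 fun hR_card => ?_)
    refine notMem_span_image_of_card_lt hMDS (by simp)
      (card_image_le (s := R) (f := Gmat.colIndex k i) |>.trans_lt hR_card)
      (c := Fin.castAdd n j) ?_ ?_
    · simp only [mem_image, Gmat.colIndex_eq_castAdd_iff, not_exists, not_and]
      intro l hl hlj hli
      exact hj ⟨hlj ▸ hli, by rwa [show Fin.castLE hkn j = l from Fin.ext hlj.symm]⟩
    · rw [hsys.transpose_castAdd, ← Gmat_transpose_image]
      exact hR.1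

lemma IsRecoverySet.two_le_card_inter_systematicServers (hsys : M.IsSystematic)
    (hMDS : M.IsMDS) (hkn : k ≤ n) (hin : i ≤ n) (hn : n + 2 ≤ k + i) {j : Fin k}
    {R : Finset (Fin n)} (hR : IsRecoverySet (Gmat M i) j R)
    (hng : ¬((j : ℕ) < i ∧ R = {Fin.castLE hkn j})) : 2 ≤ #(R ∩ systematicServers n i) := by
  have hk := (hR.eq_singleton_or_le_card hsys hMDS hkn).resolve_left hng
  have := card_add_card_le_card_inter_add_card R (systematicServers n i)
  rw [card_systematicServers hin, Fintype.card_fin] at this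
  omega

lemma IsRecoverySet.one_le_card_inter_systematicServers (hsys : M.IsSystematic)
    (hMDS : M.IsMDS) (hkn : k ≤ n) (hin : i ≤ n) (hn : n + 2 ≤ k + i) {j : Fin k}
    {R : Finset (Fin n)} (hR : IsRecoverySet (Gmat M i) j R) :
    1 ≤ #(R ∩ systematicServers n i) := by
  by_cases hg : (j : ℕ) < i ∧ R = {Fin.castLE hkn j}
  · rw [hg.2, singleton_inter_of_mem (by simpa [systematicServers] using hg.1), card_singleton]
  · exact one_le_two.trans (hR.two_le_card_inter_systematicServers hsys hMDS hkn hin hn hg)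

lemma Matrix.IsSystematic.isValidAllocation_greedyAllocation (hsys : M.IsSystematic)
    (hkn : k ≤ n) (i : ℕ) :
    IsValidAllocation (Gmat M i) (greedyRate k i) (greedyAllocation hkn i) := by
  refine ⟨fun j R => ?_, fun j R hR => ?_, fun j => ?_, fun l => ?_⟩
  · unfold greedyAllocation
    split_ifs <;> norm_num
  · refine if_neg fun h => hR ?_
    exact h.2 ▸ hsys.isRecoverySet_Gmat_castLE hkn h.1
  · by_cases hj : (j : ℕ) < i <;> simp [greedyAllocation, greedyRate, hj]
  · calc ∑ j, ∑ R ∈ univ.filter (l ∈ ·), greedyAllocation hkn i j R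
        ≤ ∑ j, if Fin.castLE hkn j = l then 1 else 0 := sum_le_sum fun j _ => by
          by_cases hj : (j : ℕ) < i
          · simp [greedyAllocation, hj, eq_comm]
          · simp only [greedyAllocation, hj, false_and, if_false, sum_const_zero]
            positivity
      _ ≤ 1 := by
          rw [sum_boole]
          exact_mod_cast card_le_one.2 fun a ha b hb => Fin.castLE_injective hkn (by simp_all)

variable {lam : Fin k → ℝ} {w : Fin k → Finset (Fin n) → ℝ}

lemma IsValidAllocation.eq_zero_of_not_greedy (hsys : M.IsSystematic) (hMDS : M.IsMDS)
    (hkn : k ≤ n) (hin : i ≤ n) (hn : n + 2 ≤ k + i) (hw : IsValidAllocation (Gmat M i) lam w)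
    (hsum : ∑ j, lam j = i) (j : Fin k) (R : Finset (Fin n))
    (hng : ¬((j : ℕ) < i ∧ R = {Fin.castLE hkn j})) : w j R = 0 := by
  by_contra hne
  have hR := hw.isRecoverySet_of_ne_zero hne
  refine hne (hw.eq_zero_of_two_le_card_inter (systematicServers n i) (fun _ _ hR => ?_) ?_ ?_)
  · exact hR.one_le_card_inter_systematicServers hsys hMDS hkn hin hn
  · rw [hsum, card_systematicServers hin]
  · exact hR.two_le_card_inter_systematicServers hsys hMDS hkn hin hn hng

lemma IsValidAllocation.eq_greedy_of_sum_eq (hsys : M.IsSystematic) (hMDS : M.IsMDS)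
    (hkn : k ≤ n) (hik : i ≤ k) (hn : n + 2 ≤ k + i) (hw : IsValidAllocation (Gmat M i) lam w)
    (hsum : ∑ j, lam j = i) : lam = greedyRate k i ∧ w = greedyAllocation hkn i := by
  have hzero := hw.eq_zero_of_not_greedy hsys hMDS hkn (hik.trans hkn) hn hsum
  have hlam (j : Fin k) : lam j = if (j : ℕ) < i then w j {Fin.castLE hkn j} else 0 := by
    rw [← hw.sum_eq j]
    split_ifs with hj
    · exact sum_eq_single _ (fun R _ hR => hzero j R fun h => hR h.2) (by simp)
    · exact sum_eq_zero fun R _ => hzero j R fun h => hj h.1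
  have hle (j : Fin k) : lam j ≤ greedyRate k i j := by
    rw [hlam j, greedyRate]
    split_ifs
    · exact hw.le_one_of_mem j (mem_singleton_self _)
    · rfl
  have hlam_eq : lam = greedyRate k i := funext fun j =>
    (sum_eq_sum_iff_of_le fun j _ => hle j).1 (hsum.trans (sum_greedyRate hik).symm) j
      (mem_univ j)
  refine ⟨hlam_eq, funext₂ fun j R => ?_⟩
  by_cases hg : (j : ℕ) < i ∧ R = {Fin.castLE hkn j}
  · have := hlam j
    rw [hlam_eq, greedyRate, if_pos hg.1, if_pos hg.1] at this
    rw [greedyAllocation, if_pos hg, hg.2, ← this]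
  · rw [hzero j R hg, greedyAllocation, if_neg hg]

end Gmat

theorem greedy_unique_for_max_sum_rate_general
    {F : Type*} [Field F] {k n : ℕ} (hk : 2 ≤ k) (hkn : k ≤ n)
    (M : Matrix (Fin k) (Fin (k + n)) F)
    (hsys : ∀ j : Fin k, ∀ r : Fin k, M r (Fin.castAdd n j) = if r = j then (1 : F) else 0)
    (hMDS : ∀ S : Finset (Fin (k + n)), S.card = k →
      LinearIndependent F (fun l : S => Mᵀ (l : Fin (k + n))))
    (i : ℕ) (hik : i ≤ k) (hn2 : n ≤ k + i - 2) :
    ((fun j : Fin k => if (j : ℕ) < i then (1 : ℝ) else 0) ∈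
        ServiceRegion (Gmat M i : Matrix (Fin k) (Fin n) F)) ∧
      (∑ j : Fin k, (if (j : ℕ) < i then (1 : ℝ) else 0) = (i : ℝ)) ∧
      (∀ lam ∈ ServiceRegion (Gmat M i : Matrix (Fin k) (Fin n) F),
        ∑ j, lam j = (i : ℝ) →
          lam = fun j : Fin k => if (j : ℕ) < i then (1 : ℝ) else 0) ∧
      IsValidAllocation (Gmat M i) (fun j : Fin k => if (j : ℕ) < i then (1 : ℝ) else 0)
        (fun (j : Fin k) (R : Finset (Fin n)) =>
          if (j : ℕ) < i ∧ R = {(⟨(j : ℕ), lt_of_lt_of_le j.isLt hkn⟩ : Fin n)} then 1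
          else 0) ∧
      ∀ w : Fin k → Finset (Fin n) → ℝ,
        IsValidAllocation (Gmat M i) (fun j : Fin k => if (j : ℕ) < i then (1 : ℝ) else 0)
            w →
          w = fun (j : Fin k) (R : Finset (Fin n)) =>
            if (j : ℕ) < i ∧ R = {(⟨(j : ℕ), lt_of_lt_of_le j.isLt hkn⟩ : Fin n)} then 1
            else 0 := by
  have hsys : M.IsSystematic := hsys
  have hMDS : M.IsMDS := hMDS
  have hn : n + 2 ≤ k + i := by omega
  have hvalid := hsys.isValidAllocation_greedyAllocation hkn i
  have hsum := sum_greedyRate hik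
  refine ⟨⟨fun j => ?_, _, hvalid⟩, hsum, ?_, hvalid, fun w hw => ?_⟩
  · dsimp only
    positivity
  · rintro lam ⟨-, w, hw⟩ hlam
    exact (hw.eq_greedy_of_sum_eq hsys hMDS hkn hik hn hlam).1
  · exact (hw.eq_greedy_of_sum_eq hsys hMDS hkn hik hn hsum).2

theorem greedy_unique_for_max_sum_rate
    {F : Type*} [Field F] [Fintype F] {k n : ℕ} (hk : 2 ≤ k) (hkn : k ≤ n)
    (hq : k + n + 1 ≤ Fintype.card F)
    (M : Matrix (Fin k) (Fin (k + n)) F)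
    (hsys : ∀ j : Fin k, ∀ r : Fin k, M r (Fin.castAdd n j) = if r = j then (1 : F) else 0)
    (hMDS : ∀ S : Finset (Fin (k + n)), S.card = k →
      LinearIndependent F (fun l : S => Mᵀ (l : Fin (k + n))))
    (i : ℕ) (hik : i ≤ k) (hn2 : n ≤ k + i - 2) :
    ((fun j : Fin k => if (j : ℕ) < i then (1 : ℝ) else 0) ∈
        ServiceRegion (Gmat M i : Matrix (Fin k) (Fin n) F)) ∧
      (∑ j : Fin k, (if (j : ℕ) < i then (1 : ℝ) else 0) = (i : ℝ)) ∧
      (∀ lam ∈ ServiceRegion (Gmat M i : Matrix (Fin k) (Fin n) F),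
        ∑ j, lam j = (i : ℝ) →
          lam = fun j : Fin k => if (j : ℕ) < i then (1 : ℝ) else 0) ∧
      IsValidAllocation (Gmat M i) (fun j : Fin k => if (j : ℕ) < i then (1 : ℝ) else 0)
        (fun (j : Fin k) (R : Finset (Fin n)) =>
          if (j : ℕ) < i ∧ R = {(⟨(j : ℕ), lt_of_lt_of_le j.isLt hkn⟩ : Fin n)} then 1
          else 0) ∧
      ∀ w : Fin k → Finset (Fin n) → ℝ,
        IsValidAllocation (Gmat M i) (fun j : Fin k => if (j : ℕ) < i then (1 : ℝ) else 0)
            w →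
          w = fun (j : Fin k) (R : Finset (Fin n)) =>
            if (j : ℕ) < i ∧ R = {(⟨(j : ℕ), lt_of_lt_of_le j.isLt hkn⟩ : Fin n)} then 1
            else 0 :=
  greedy_unique_for_max_sum_rate_general hk hkn M hsys hMDS i hik hn2
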